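/- Let K be a field, c ∈ K* not a root of unity, R = K[t,t⁻¹] with the automorphism γ(t) = ct. Let P be the R-module of rational functions on 𝔾ₘ with at most simple poles at the points c^i (i ∈ ℤ) and regular elsewhere, with its natural Γ-equivariant structure, and Q = ⊕_{i∈ℤ} R/(t − c^i). Then the short exact sequence of Γ-equivariant R-modules 0 → R → P → Q → 0 does not split, R and Q are irreducible non-isomorphic Γ-equivariant R-modules, and P is Schur irreducible (End = K) but not irreducible. -/

import Mathlib

/-!
Multiplication by `t` on `Q`, and `γ` on `R = K[t,t⁻¹]` (where `γ (t ^ n) = c ^ n t ^ n`), act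
diagonally with the pairwise distinct eigenvalues `c ^ i`, so every invariant subspace is spanned
by the basis vectors it contains. This gives the irreducibility of `R` and of `Q`, and also the
independence of the poles `1/(t - c ^ i)` modulo `R`, because modulo `R` multiplication by `t`
acts on them in the same diagonal way. Hence `P = R ⊕ (poles)` and the residues define `P → Q`.
The sequence does not split: `t - 1` times the complement component of `1/(t - 1)` would lie in
`R`. An equivariant endomorphism `φ` of `P` is multiplication by `φ 1`, which is `γ`-fixed;
since `γ` shifts residues, `φ 1` has none, so it lies in `R`, where `γ`-fixed means constant.
-/

noncomputable section

variable {K : Type} [Field K]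

/-- The Laurent polynomial subalgebra `R = K[t,t⁻¹]` inside the field of rational
functions `K(t)`. -/
def Rsub (K : Type) [Field K] : Subalgebra K (RatFunc K) :=
  Algebra.adjoin K {RatFunc.X, RatFunc.X⁻¹}

def Rmod (K : Type) [Field K] : Submodule K (RatFunc K) :=
  Subalgebra.toSubmodule (Rsub K)

/-- The space `P` of rational functions with at most simple poles at the points
`c^i`, `i ∈ ℤ`, and regular elsewhere on `𝔾ₘ`:
`P = R + span_K {1/(t - c^i) : i ∈ ℤ}`. -/
def Pmod (c : Kˣ) : Submodule K (RatFunc K) :=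
  Rmod K ⊔ Submodule.span K
    {f : RatFunc K | ∃ i : ℤ, f = (RatFunc.X - RatFunc.C ((c ^ i : Kˣ) : K))⁻¹}

/-- A subspace `W` of `K(t)` is an equivariant `R`-submodule if it is stable under
multiplication by `R` and under `γ` and `γ⁻¹`. -/
def Stab (Γ : RatFunc K ≃ₐ[K] RatFunc K) (W : Submodule K (RatFunc K)) : Prop :=
  (∀ r ∈ Rsub K, ∀ f ∈ W, r * f ∈ W) ∧ (∀ f ∈ W, Γ f ∈ W) ∧ (∀ f ∈ W, Γ.symm f ∈ W)

/-- The action of `t` on the model `Q = ⊕_{i ∈ ℤ} R/(t - c^i) ≅ ⊕_{i ∈ ℤ} K`: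
multiplication by `c^i` in the `i`-th component. -/
def tQ (c : Kˣ) : (ℤ →₀ K) →ₗ[K] (ℤ →₀ K) :=
  Finsupp.lsum K fun i => ((c ^ i : Kˣ) : K) • Finsupp.lsingle i

/-- The action of `γ` on the model `Q`: `γ` sends the skyscraper at `c^{i+1}` to
the skyscraper at `c^i`, with the factor `c⁻¹` coming from `γ(t) = ct`. -/
def γQ (c : Kˣ) : (ℤ →₀ K) →ₗ[K] (ℤ →₀ K) :=
  Finsupp.lsum K fun i => ((c⁻¹ : Kˣ) : K) • Finsupp.lsingle (i - 1)

/-- The inverse of `γQ`. -/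
def γQinv (c : Kˣ) : (ℤ →₀ K) →ₗ[K] (ℤ →₀ K) :=
  Finsupp.lsum K fun i => ((c : Kˣ) : K) • Finsupp.lsingle (i + 1)

section LaurentPolynomials

open RatFunc

theorem X_sub_C_ne_zero (d : K) : (X - C d : RatFunc K) ≠ 0 := by
  rw [← algebraMap_X, ← algebraMap_C, ← map_sub]
  exact (map_ne_zero_iff _ (algebraMap_injective K)).2 (Polynomial.X_sub_C_ne_zero d)

theorem eq_zero_of_X_sub_C_mul_eq_zero {d : K} {f : RatFunc K} (h : (X - C d) * f = 0) :
    f = 0 :=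
  (mul_eq_zero.1 h).resolve_left (X_sub_C_ne_zero d)

theorem X_mem_Rsub : (X : RatFunc K) ∈ Rsub K :=
  Algebra.subset_adjoin (Set.mem_insert _ _)

theorem X_inv_mem_Rsub : (X⁻¹ : RatFunc K) ∈ Rsub K :=
  Algebra.subset_adjoin (Set.mem_insert_of_mem _ rfl)

theorem C_mem_Rsub (k : K) : (C k : RatFunc K) ∈ Rsub K := by
  rw [← algebraMap_eq_C]
  exact Subalgebra.algebraMap_mem _ k

theorem zpow_X_mem_Rsub (n : ℤ) : (X : RatFunc K) ^ n ∈ Rsub K := by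
  cases n with
  | ofNat m => simpa using pow_mem X_mem_Rsub m
  | negSucc m => simpa [zpow_negSucc, ← inv_pow] using pow_mem X_inv_mem_Rsub (m + 1)

theorem X_sub_C_mem_Rsub (d : K) : (X - C d : RatFunc K) ∈ Rsub K :=
  sub_mem X_mem_Rsub (C_mem_Rsub d)

theorem Rmod_le_Pmod (c : Kˣ) : Rmod K ≤ Pmod c := le_sup_left

variable (K) in
def ofLaurent : (ℤ →₀ K) →ₗ[K] RatFunc K :=
  Finsupp.linearCombination K fun n : ℤ => (X : RatFunc K) ^ n

theorem ofLaurent_single (n : ℤ) (k : K) : ofLaurent K (Finsupp.single n k) = k • X ^ n :=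
  Finsupp.linearCombination_single _ _ _

theorem Rmod_eq_range_ofLaurent : Rmod K = LinearMap.range (ofLaurent K) := by
  rw [Rmod, Rsub, Algebra.adjoin_eq_span, ofLaurent, Finsupp.range_linearCombination]
  congr 1
  apply le_antisymm
  · intro x hx
    induction hx using Submonoid.closure_induction with
    | mem y hy =>
      rcases hy with rfl | rfl
      · exact ⟨1, zpow_one _⟩
      · exact ⟨-1, zpow_neg_one _⟩
    | one => exact ⟨0, zpow_zero _⟩
    | mul y z _ _ hy hz =>
      obtain ⟨n, rfl⟩ := hy
      obtain ⟨m, rfl⟩ := hz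
      exact ⟨n + m, zpow_add₀ X_ne_zero n m⟩
  · rintro _ ⟨n, rfl⟩
    have hX : (X : RatFunc K) ∈ Submonoid.closure {X, X⁻¹} :=
      Submonoid.subset_closure (Set.mem_insert _ _)
    have hXinv : (X⁻¹ : RatFunc K) ∈ Submonoid.closure {X, X⁻¹} :=
      Submonoid.subset_closure (Set.mem_insert_of_mem _ rfl)
    cases n with
    | ofNat m => simpa using pow_mem hX m
    | negSucc m => simpa [zpow_negSucc, ← inv_pow] using pow_mem hXinv (m + 1)

theorem exists_X_pow_mul_eq_algebraMap {r : RatFunc K} (hr : r ∈ Rsub K) :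
    ∃ (n : ℕ) (p : Polynomial K), X ^ n * r = algebraMap (Polynomial K) (RatFunc K) p := by
  induction hr using Algebra.adjoin_induction with
  | mem y hy =>
    rcases hy with rfl | rfl
    · exact ⟨0, Polynomial.X, by simp [algebraMap_X]⟩
    · exact ⟨1, 1, by simp [X_ne_zero]⟩
  | algebraMap k => exact ⟨0, Polynomial.C k, by simp [algebraMap_C]⟩
  | add y z _ _ hy hz =>
    obtain ⟨n₁, p₁, h₁⟩ := hy
    obtain ⟨n₂, p₂, h₂⟩ := hz
    refine ⟨n₁ + n₂, Polynomial.X ^ n₂ * p₁ + Polynomial.X ^ n₁ * p₂, ?_⟩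
    rw [map_add, map_mul, map_mul, ← h₁, ← h₂, map_pow, map_pow, algebraMap_X]
    ring
  | mul y z _ _ hy hz =>
    obtain ⟨n₁, p₁, h₁⟩ := hy
    obtain ⟨n₂, p₂, h₂⟩ := hz
    refine ⟨n₁ + n₂, p₁ * p₂, ?_⟩
    rw [map_mul, ← h₁, ← h₂]
    ring

theorem inv_X_sub_C_not_mem_Rmod {d : K} (hd : d ≠ 0) : (X - C d)⁻¹ ∉ Rmod K := by
  intro hmem
  obtain ⟨n, p, hp⟩ := exists_X_pow_mul_eq_algebraMap hmem
  have hpoly : p * (Polynomial.X - Polynomial.C d) = Polynomial.X ^ n := by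
    apply algebraMap_injective K
    rw [map_mul, ← hp, map_sub, algebraMap_X, algebraMap_C, map_pow, algebraMap_X, mul_assoc,
      inv_mul_cancel₀ (X_sub_C_ne_zero d), mul_one]
  have h0 : (0 : K) = d ^ n := by simpa using congrArg (Polynomial.eval d) hpoly
  exact pow_ne_zero n hd h0.symm

/-- `t - d` times the `W`-component of `1/(t - d)` lies in `W ⊓ R`. -/
theorem inv_X_sub_C_not_mem_sup {W : Submodule K (RatFunc K)}
    (hW : ∀ r ∈ Rsub K, ∀ f ∈ W, r * f ∈ W) (hWR : W ⊓ Rmod K = ⊥) {d : K} (hd : d ≠ 0) :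
    (X - C d)⁻¹ ∉ W ⊔ Rmod K := by
  intro hmem
  obtain ⟨w, hw, r, hr, hwr⟩ := Submodule.mem_sup.1 hmem
  have hprod : (X - C d) * w = 1 - (X - C d) * r := by
    rw [eq_sub_iff_add_eq, ← mul_add, hwr, mul_inv_cancel₀ (X_sub_C_ne_zero d)]
  have hR : (X - C d) * w ∈ Rmod K := by
    rw [hprod]
    exact sub_mem (one_mem (Rsub K)) (mul_mem (X_sub_C_mem_Rsub d) (show r ∈ Rsub K from hr) :)
  have hw0 : w = 0 := by
    refine eq_zero_of_X_sub_C_mul_eq_zero (d := d) ?_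
    rw [← Submodule.mem_bot K, ← hWR]
    exact ⟨hW _ (X_sub_C_mem_Rsub d) w hw, hR⟩
  exact inv_X_sub_C_not_mem_Rmod hd (by rwa [← hwr, hw0, zero_add])

end LaurentPolynomials

def orbitPt (c : Kˣ) (i : ℤ) : K := ((c ^ i : Kˣ) : K)

theorem orbitPt_injective {c : Kˣ} (hroot : ∀ n : ℕ, 0 < n → c ^ n ≠ 1) :
    Function.Injective (orbitPt c) := by
  have hinf : ¬IsOfFinOrder c := by
    rw [isOfFinOrder_iff_pow_eq_one]
    rintro ⟨n, hn, h⟩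
    exact hroot n hn h
  exact Units.val_injective.comp (injective_zpow_iff_not_isOfFinOrder.2 hinf)

theorem orbitPt_zero (c : Kˣ) : orbitPt c 0 = 1 := by
  simp [orbitPt]

theorem orbitPt_ne_zero (c : Kˣ) (i : ℤ) : orbitPt c i ≠ 0 := Units.ne_zero _

theorem mul_orbitPt_sub_one (c : Kˣ) (i : ℤ) : (c : K) * orbitPt c (i - 1) = orbitPt c i := by
  rw [orbitPt, orbitPt, ← Units.val_mul, ← zpow_one_add, add_sub_cancel]

theorem orbitPt_inv_mul (c : Kˣ) (i : ℤ) : orbitPt c⁻¹ i * orbitPt c i = 1 := by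
  rw [orbitPt, orbitPt, ← Units.val_mul, inv_zpow, inv_mul_cancel, Units.val_one]

section QModel

variable (c : Kˣ)

theorem tQ_single (i : ℤ) (k : K) :
    tQ c (Finsupp.single i k) = Finsupp.single i (orbitPt c i * k) := by
  simp [tQ, orbitPt]

theorem tQ_apply (a : ℤ →₀ K) (j : ℤ) : tQ c a j = orbitPt c j * a j := by
  induction a using Finsupp.induction_linear with
  | zero => simp
  | add f g hf hg => rw [map_add, Finsupp.add_apply, hf, hg, Finsupp.add_apply, mul_add]
  | single i k =>
    rw [tQ_single]
    rcases eq_or_ne i j with rfl | h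
    · simp
    · simp [h]

theorem γQ_single (i : ℤ) (k : K) :
    γQ c (Finsupp.single i k) = Finsupp.single (i - 1) ((c : K)⁻¹ * k) := by
  simp [γQ]

theorem γQinv_single (i : ℤ) (k : K) :
    γQinv c (Finsupp.single i k) = Finsupp.single (i + 1) ((c : K) * k) := by
  simp [γQinv]

theorem γQ_apply (b : ℤ →₀ K) (j : ℤ) : γQ c b j = (c : K)⁻¹ * b (j + 1) := by
  induction b using Finsupp.induction_linear with
  | zero => simp
  | add f g hf hg => rw [map_add, Finsupp.add_apply, hf, hg, Finsupp.add_apply, mul_add]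
  | single i k =>
    rw [γQ_single]
    rcases eq_or_ne i (j + 1) with rfl | h
    · simp
    · rw [Finsupp.single_apply, Finsupp.single_apply, if_neg (by omega), if_neg h, mul_zero]

theorem eq_zero_of_γQ_eq_self {b : ℤ →₀ K} (h : γQ c b = b) : b = 0 := by
  by_contra hb
  have hne : b.support.Nonempty := Finsupp.support_nonempty_iff.2 hb
  set m := b.support.max' hne
  have hm1 : b (m + 1) = 0 :=
    Finsupp.notMem_support_iff.1 fun h => by linarith [b.support.le_max' _ h]
  have hm := γQ_apply c b m
  rw [h, hm1, mul_zero] at hm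
  exact Finsupp.mem_support_iff.1 (b.support.max'_mem hne) hm

theorem eq_single_zero_of_tQ_eq_self (hroot : ∀ n : ℕ, 0 < n → c ^ n ≠ 1) {a : ℤ →₀ K}
    (h : tQ c a = a) : a = Finsupp.single 0 (a 0) := by
  ext n
  rcases eq_or_ne n 0 with rfl | hn
  · rw [Finsupp.single_eq_same]
  · rw [Finsupp.single_eq_of_ne hn]
    have hn' := tQ_apply c a n
    rw [h] at hn'
    by_contra h0
    refine hn ((orbitPt_injective hroot) ?_)
    rw [orbitPt_zero]
    exact (mul_eq_right₀ h0).1 hn'.symm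

end QModel

section Diagonal

variable {ι : Type*} {D : (ι →₀ K) →ₗ[K] (ι →₀ K)} {d : ι → K}

theorem Finsupp.single_mem_of_diagonal (hd : Function.Injective d) (hD : ∀ a i, D a i = d i * a i)
    {W : Submodule K (ι →₀ K)} (hW : ∀ a ∈ W, D a ∈ W) {a : ι →₀ K} (ha : a ∈ W) (j : ι) :
    Finsupp.single j (a j) ∈ W := by
  classical
  induction hn : a.support.card generalizing a with
  | zero =>
    rw [Finset.card_eq_zero, Finsupp.support_eq_empty] at hn
    simp [hn]
  | succ n ih =>
    by_cases hsingle : a = Finsupp.single j (a j)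
    · rwa [← hsingle]
    obtain ⟨i, hi⟩ := DFunLike.ne_iff.1 hsingle
    have hij : i ≠ j := by rintro rfl; simp at hi
    rw [Finsupp.single_eq_of_ne hij] at hi
    -- `D - d i` kills the `i`-th coordinate and rescales the others
    set a' := D a - d i • a
    have ha' : ∀ l, a' l = (d l - d i) * a l := fun l => by
      simp [a', hD, sub_mul]
    have hsupp : a'.support = a.support.erase i := by
      ext l
      simp only [Finset.mem_erase, Finsupp.mem_support_iff, ha', ne_eq, mul_eq_zero, sub_eq_zero,
        not_or, hd.eq_iff]
    have hcoef : d j - d i ≠ 0 := sub_ne_zero.2 (hd.ne hij.symm)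
    have hmem := ih (sub_mem (hW a ha) (W.smul_mem _ ha))
      (by rw [hsupp, Finset.card_erase_of_mem (Finsupp.mem_support_iff.2 hi), hn]; rfl)
    have := W.smul_mem (d j - d i)⁻¹ hmem
    rwa [Finsupp.smul_single, ha', smul_eq_mul, inv_mul_cancel_left₀ hcoef] at this

theorem Finsupp.exists_single_mem_of_diagonal (hd : Function.Injective d)
    (hD : ∀ a i, D a i = d i * a i) {W : Submodule K (ι →₀ K)} (hW : ∀ a ∈ W, D a ∈ W)
    (hne : W ≠ ⊥) : ∃ j k, k ≠ 0 ∧ Finsupp.single j k ∈ W := by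
  obtain ⟨a, ha, ha0⟩ := W.exists_mem_ne_zero_of_ne_bot hne
  obtain ⟨j, hj⟩ := Finsupp.support_nonempty_iff.2 ha0
  exact ⟨j, a j, Finsupp.mem_support_iff.1 hj, single_mem_of_diagonal hd hD hW ha j⟩

end Diagonal

theorem Q_irreducible {c : Kˣ} (hroot : ∀ n : ℕ, 0 < n → c ^ n ≠ 1) (Wq : Submodule K (ℤ →₀ K))
    (ht : ∀ a ∈ Wq, tQ c a ∈ Wq) (hγ : ∀ a ∈ Wq, γQ c a ∈ Wq) (hγinv : ∀ a ∈ Wq, γQinv c a ∈ Wq) :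
    Wq = ⊥ ∨ Wq = ⊤ := by
  refine or_iff_not_imp_left.2 fun hne => ?_
  obtain ⟨j, k, hk, hjk⟩ :=
    Finsupp.exists_single_mem_of_diagonal (orbitPt_injective hroot) (tQ_apply c) ht hne
  have hc : (c : K) ≠ 0 := c.ne_zero
  have hall : ∀ i (x : K), Finsupp.single i x ∈ Wq := by
    intro i
    induction i using Int.inductionOn' (b := j) with
    | zero => exact fun x => by simpa [hk] using Wq.smul_mem (x / k) hjk
    | succ i _ ih =>
      intro x
      have h := hγinv _ (ih ((c : K)⁻¹ * x))
      rwa [γQinv_single, mul_inv_cancel_left₀ hc] at h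
    | pred i _ ih =>
      intro x
      have h := hγ _ (ih ((c : K) * x))
      rwa [γQ_single, inv_mul_cancel_left₀ hc] at h
  refine eq_top_iff.2 fun x _ => ?_
  rw [← Finsupp.sum_single x]
  exact Wq.sum_mem fun i _ => hall i (x i)

section Automorphism

open RatFunc

variable {c : Kˣ} {Γ : RatFunc K ≃ₐ[K] RatFunc K}

theorem Γ_C (k : K) : Γ (C k) = C k := by
  rw [← algebraMap_eq_C, AlgEquiv.commutes]

variable (hΓ : Γ X = C (c : K) * X)
include hΓ

theorem Γ_zpow_X (n : ℤ) : Γ (X ^ n) = orbitPt c n • X ^ n := by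
  rw [map_zpow₀, hΓ, mul_zpow, ← map_zpow₀, ← algebraMap_eq_C, ← Algebra.smul_def, orbitPt,
    Units.val_zpow_eq_zpow_val]

theorem Γ_ofLaurent (a : ℤ →₀ K) : Γ (ofLaurent K a) = ofLaurent K (tQ c a) := by
  induction a using Finsupp.induction_linear with
  | zero => simp
  | add f g hf hg => simp only [map_add, hf, hg]
  | single i k => rw [ofLaurent_single, map_smul, Γ_zpow_X hΓ, tQ_single, ofLaurent_single,
      smul_smul, mul_comm]

/-- The monomials are eigenvectors of `γ` for the pairwise distinct eigenvalues `c ^ n`. -/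
theorem ofLaurent_injective (hroot : ∀ n : ℕ, 0 < n → c ^ n ≠ 1) :
    Function.Injective (ofLaurent K) :=
  Module.End.eigenvectors_linearIndependent' Γ.toLinearMap (orbitPt c) (orbitPt_injective hroot)
    _ fun n => ⟨Module.End.mem_eigenspace_iff.2 (Γ_zpow_X hΓ n), zpow_ne_zero n X_ne_zero⟩

theorem Γ_symm_ofLaurent (a : ℤ →₀ K) : Γ.symm (ofLaurent K a) = ofLaurent K (tQ c⁻¹ a) := by
  rw [AlgEquiv.symm_apply_eq, Γ_ofLaurent hΓ]
  congr 1
  ext j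
  rw [tQ_apply, tQ_apply, ← mul_assoc, mul_comm (orbitPt c j), orbitPt_inv_mul, one_mul]

theorem stab_Rmod : Stab Γ (Rmod K) := by
  refine ⟨fun r hr f hf => (mul_mem hr hf : r * f ∈ Rsub K), ?_, ?_⟩ <;>
  · intro f hf
    rw [Rmod_eq_range_ofLaurent] at hf ⊢
    obtain ⟨a, rfl⟩ := hf
    simp only [Γ_ofLaurent hΓ, Γ_symm_ofLaurent hΓ, LinearMap.mem_range_self]

theorem R_irreducible (hroot : ∀ n : ℕ, 0 < n → c ^ n ≠ 1) (W : Submodule K (RatFunc K))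
    (hW : Stab Γ W) (hle : W ≤ Rmod K) : W = ⊥ ∨ W = Rmod K := by
  refine or_iff_not_imp_left.2 fun hne => le_antisymm hle ?_
  have hne' : W.comap (ofLaurent K) ≠ ⊥ := by
    contrapose! hne
    rw [eq_bot_iff]
    intro w hw
    have hwR := hle hw
    rw [Rmod_eq_range_ofLaurent] at hwR
    obtain ⟨a, rfl⟩ := hwR
    rw [(Submodule.eq_bot_iff _).1 hne a hw, map_zero]
    exact zero_mem _
  obtain ⟨j, k, hk, hjk⟩ := Finsupp.exists_single_mem_of_diagonal (orbitPt_injective hroot)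
    (tQ_apply c) (fun a ha => by simpa [Γ_ofLaurent hΓ] using hW.2.1 _ ha) hne'
  have h1 : (1 : RatFunc K) ∈ W := by
    have h := hW.1 _ (mul_mem (C_mem_Rsub k⁻¹) (zpow_X_mem_Rsub (-j))) _ hjk
    rwa [ofLaurent_single, smul_eq_C_mul, mul_mul_mul_comm, ← map_mul, inv_mul_cancel₀ hk, map_one,
      one_mul, zpow_neg, inv_mul_cancel₀ (zpow_ne_zero _ X_ne_zero)] at h
  exact fun r hr => by simpa using hW.1 r hr 1 h1

end Automorphism

section Poles

open RatFunc

variable (c : Kˣ)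

def pole (i : ℤ) : RatFunc K := (X - C (orbitPt c i))⁻¹

def poleSum : (ℤ →₀ K) →ₗ[K] RatFunc K := Finsupp.linearCombination K (pole c)

theorem poleSum_single (i : ℤ) (k : K) : poleSum c (Finsupp.single i k) = k • pole c i :=
  Finsupp.linearCombination_single _ _ _

theorem X_sub_C_mul_pole (i : ℤ) : (X - C (orbitPt c i)) * pole c i = 1 :=
  mul_inv_cancel₀ (X_sub_C_ne_zero _)

theorem pole_mem_Pmod (i : ℤ) : pole c i ∈ Pmod c :=
  le_sup_right (α := Submodule K (RatFunc K)) (Submodule.subset_span ⟨i, rfl⟩)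

theorem pole_not_mem_Rmod (i : ℤ) : pole c i ∉ Rmod K :=
  inv_X_sub_C_not_mem_Rmod (orbitPt_ne_zero c i)

theorem X_mul_poleSum (b : ℤ →₀ K) :
    X * poleSum c b = C (b.sum fun _ k => k) + poleSum c (tQ c b) := by
  induction b using Finsupp.induction_linear with
  | zero => simp
  | add f g hf hg =>
    rw [map_add, mul_add, hf, hg, map_add, map_add,
      Finsupp.sum_add_index' (fun _ => rfl) (fun _ _ _ => rfl), map_add]
    ring
  | single i k =>
    have hX : X = (X - C (orbitPt c i)) + C (orbitPt c i) := (sub_add_cancel _ _).symm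
    rw [poleSum_single, tQ_single, poleSum_single, Finsupp.sum_single_index rfl, mul_smul_comm,
      hX, add_mul, X_sub_C_mul_pole, smul_add, smul_eq_C_mul, smul_eq_C_mul, smul_eq_C_mul,
      mul_one, map_mul, mul_assoc, mul_left_comm]

/-- Modulo `R`, multiplication by `t` acts on the poles diagonally (`X_mul_poleSum`). -/
theorem eq_zero_of_poleSum_mem_Rmod (hroot : ∀ n : ℕ, 0 < n → c ^ n ≠ 1) {b : ℤ →₀ K}
    (hb : poleSum c b ∈ Rmod K) : b = 0 := by
  have hstab : ∀ a ∈ (Rmod K).comap (poleSum c), tQ c a ∈ (Rmod K).comap (poleSum c) := by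
    intro a ha
    rw [Submodule.mem_comap, ← add_sub_cancel_left (C (a.sum fun _ k => k)) (poleSum c (tQ c a)),
      ← X_mul_poleSum]
    exact sub_mem (mul_mem X_mem_Rsub (show poleSum c a ∈ Rsub K from ha) :) (C_mem_Rsub _)
  by_contra hb0
  obtain ⟨j, hj⟩ := Finsupp.support_nonempty_iff.2 hb0
  have hsingle := Finsupp.single_mem_of_diagonal (orbitPt_injective hroot) (tQ_apply c) hstab hb j
  rw [Submodule.mem_comap, poleSum_single] at hsingle
  refine pole_not_mem_Rmod c j ?_
  simpa [Finsupp.mem_support_iff.1 hj] using (Rmod K).smul_mem (b j)⁻¹ hsingle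

variable {c} {Γ : RatFunc K ≃ₐ[K] RatFunc K} (hΓ : Γ X = C (c : K) * X)
include hΓ

theorem Γ_pole (i : ℤ) : Γ (pole c i) = (c : K)⁻¹ • pole c (i - 1) := by
  rw [pole, map_inv₀, map_sub, hΓ, Γ_C, ← mul_orbitPt_sub_one, map_mul, ← mul_sub, mul_inv,
    ← map_inv₀, ← smul_eq_C_mul, pole]

theorem Γ_poleSum (b : ℤ →₀ K) : Γ (poleSum c b) = poleSum c (γQ c b) := by
  induction b using Finsupp.induction_linear with
  | zero => simp
  | add f g hf hg => simp only [map_add, hf, hg]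
  | single i k =>
    rw [poleSum_single, map_smul, Γ_pole hΓ, γQ_single, poleSum_single, smul_smul, mul_comm]

end Poles

section Residue

open RatFunc

variable {c : Kˣ}

variable (c) in
def decomp : (Rmod K × (ℤ →₀ K)) →ₗ[K] RatFunc K := (Rmod K).subtype.coprod (poleSum c)

variable (c) in
theorem range_decomp : LinearMap.range (decomp c) = Pmod c := by
  rw [decomp, LinearMap.range_coprod, Submodule.range_subtype, poleSum,
    Finsupp.range_linearCombination, Pmod]
  congr 2
  ext f
  exact ⟨fun ⟨i, h⟩ => ⟨i, h.symm⟩, fun ⟨i, h⟩ => ⟨i, h.symm⟩⟩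

variable (hroot : ∀ n : ℕ, 0 < n → c ^ n ≠ 1)
include hroot

theorem decomp_injective : Function.Injective (decomp c) := by
  rw [← LinearMap.ker_eq_bot, Submodule.eq_bot_iff]
  rintro ⟨r, b⟩ h
  have hrb : (r : RatFunc K) + poleSum c b = 0 := h
  have hb : b = 0 := eq_zero_of_poleSum_mem_Rmod c hroot <| by
    rw [eq_neg_of_add_eq_zero_right hrb]
    exact neg_mem r.2
  rw [hb, map_zero, add_zero, ZeroMemClass.coe_eq_zero] at hrb
  rw [hrb, hb, Prod.mk_zero_zero]

def Pequiv : (Rmod K × (ℤ →₀ K)) ≃ₗ[K] Pmod c :=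
  (LinearEquiv.ofInjective _ (decomp_injective hroot)).trans
    (LinearEquiv.ofEq _ _ (range_decomp c))

theorem Pequiv_apply (x : Rmod K × (ℤ →₀ K)) :
    (Pequiv hroot x : RatFunc K) = x.1 + poleSum c x.2 := rfl

/-- The `i`-th coordinate of `residues hroot f` is the residue of `f` at `t = c ^ i`. -/
def residues : Pmod c →ₗ[K] (ℤ →₀ K) :=
  LinearMap.snd K (Rmod K) (ℤ →₀ K) ∘ₗ (Pequiv hroot).symm.toLinearMap

theorem residues_eq {f : Pmod c} {r : RatFunc K} (hr : r ∈ Rmod K) {b : ℤ →₀ K}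
    (h : (f : RatFunc K) = r + poleSum c b) : residues hroot f = b := by
  have hf : Pequiv hroot (⟨r, hr⟩, b) = f := Subtype.ext h.symm
  rw [residues, LinearMap.comp_apply, LinearEquiv.coe_coe, ← hf, LinearEquiv.symm_apply_apply]
  rfl

theorem exists_eq_add_poleSum_residues (f : Pmod c) :
    ∃ r ∈ Rmod K, (f : RatFunc K) = r + poleSum c (residues hroot f) :=
  ⟨_, ((Pequiv hroot).symm f).1.2, (congrArg Subtype.val ((Pequiv hroot).apply_symm_apply f)).symm⟩

theorem residues_surjective : Function.Surjective (residues hroot : Pmod c →ₗ[K] (ℤ →₀ K)) :=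
  fun b => ⟨Pequiv hroot (0, b), residues_eq hroot (zero_mem _) (Pequiv_apply hroot _)⟩

theorem residues_eq_zero_iff (f : Pmod c) : residues hroot f = 0 ↔ (f : RatFunc K) ∈ Rmod K := by
  obtain ⟨r, hr, hf⟩ := exists_eq_add_poleSum_residues hroot f
  refine ⟨fun h => ?_, fun h => residues_eq hroot h (by rw [map_zero, add_zero])⟩
  rwa [hf, h, map_zero, add_zero]

theorem residues_X_mul (f : Pmod c) (hf : X * (f : RatFunc K) ∈ Pmod c) :
    residues hroot ⟨X * (f : RatFunc K), hf⟩ = tQ c (residues hroot f) := by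
  obtain ⟨r, hr, hfr⟩ := exists_eq_add_poleSum_residues hroot f
  refine residues_eq hroot (r := X * r + C ((residues hroot f).sum fun _ k => k)) ?_ ?_
  · exact show _ ∈ Rsub K from add_mem (mul_mem X_mem_Rsub hr) (C_mem_Rsub _)
  · show X * (f : RatFunc K) = _
    rw [hfr, mul_add, X_mul_poleSum, add_assoc]

theorem residues_Γ {Γ : RatFunc K ≃ₐ[K] RatFunc K} (hΓ : Γ X = C (c : K) * X)
    (f : Pmod c) (hf : Γ (f : RatFunc K) ∈ Pmod c) :
    residues hroot ⟨Γ (f : RatFunc K), hf⟩ = γQ c (residues hroot f) := by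
  obtain ⟨r, hr, hfr⟩ := exists_eq_add_poleSum_residues hroot f
  refine residues_eq hroot ((stab_Rmod hΓ).2.1 r hr) ?_
  show Γ (f : RatFunc K) = _
  rw [hfr, map_add, Γ_poleSum hΓ]

end Residue

section Endomorphisms

open RatFunc

variable {c : Kˣ} (hroot : ∀ n : ℕ, 0 < n → c ^ n ≠ 1) {Γ : RatFunc K ≃ₐ[K] RatFunc K}
  (hΓ : Γ X = C (c : K) * X)
include hroot hΓ

theorem exists_eq_C_of_Γ_eq_self {g : RatFunc K} (hg : g ∈ Pmod c) (hfix : Γ g = g) :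
    ∃ k, g = C k := by
  have hres : γQ c (residues hroot ⟨g, hg⟩) = residues hroot ⟨g, hg⟩ := by
    rw [← residues_Γ hroot hΓ ⟨g, hg⟩ (by rwa [hfix])]
    exact congrArg _ (Subtype.ext hfix)
  have hgR := (residues_eq_zero_iff hroot ⟨g, hg⟩).1 (eq_zero_of_γQ_eq_self c hres)
  rw [Rmod_eq_range_ofLaurent] at hgR
  obtain ⟨a, rfl⟩ := hgR
  have ha : tQ c a = a := ofLaurent_injective hΓ hroot (by rw [← Γ_ofLaurent hΓ, hfix])
  refine ⟨a 0, ?_⟩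
  nth_rewrite 1 [eq_single_zero_of_tQ_eq_self c hroot ha]
  rw [ofLaurent_single, zpow_zero, smul_eq_C_mul, mul_one]

theorem exists_eq_smul_id_of_equivariant
    (φ : (Pmod c : Submodule K (RatFunc K)) →ₗ[K] (Pmod c : Submodule K (RatFunc K)))
    (hmul : ∀ r ∈ Rsub K, ∀ (f : Pmod c) (hrf : r * (f : RatFunc K) ∈ Pmod c),
      (φ ⟨r * (f : RatFunc K), hrf⟩ : RatFunc K) = r * (φ f : RatFunc K))
    (hgam : ∀ (f : Pmod c) (hf : Γ (f : RatFunc K) ∈ Pmod c),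
      (φ ⟨Γ (f : RatFunc K), hf⟩ : RatFunc K) = Γ (φ f : RatFunc K)) :
    ∃ k : K, φ = k • LinearMap.id := by
  set one : Pmod c := ⟨1, Rmod_le_Pmod c (one_mem (Rsub K))⟩
  obtain ⟨k, hk⟩ : ∃ k, (φ one : RatFunc K) = C k := by
    refine exists_eq_C_of_Γ_eq_self hroot hΓ (φ one).2 ?_
    have h := hgam one (by rw [show (one : RatFunc K) = 1 from rfl, map_one]; exact one.2)
    simp_rw [one, map_one] at h
    exact h.symm
  -- `r * φ f = φ (r * f) = r * f * φ 1`
  have hdiv : ∀ (f : Pmod c) (r : RatFunc K), r ∈ Rsub K → r ≠ 0 → r * f ∈ Rsub K →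
      (φ f : RatFunc K) = k • (f : RatFunc K) := by
    intro f r hr hr0 hrf
    apply mul_left_cancel₀ hr0
    have hone := hmul (r * f) hrf one (by simpa [one] using Rmod_le_Pmod c hrf)
    simp only [one, mul_one] at hone
    rw [← hmul r hr f (Rmod_le_Pmod c hrf), hone, hk, smul_eq_C_mul]
    ring
  refine ⟨k, ?_⟩
  have hcomp : (Pmod c).subtype ∘ₗ φ ∘ₗ (Pequiv hroot).toLinearMap
      = k • ((Pmod c).subtype ∘ₗ (Pequiv hroot).toLinearMap) := by
    refine LinearMap.prod_ext ?_ ?_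
    · ext r
      exact hdiv _ 1 (one_mem _) one_ne_zero (by simp [Pequiv_apply]; exact r.2)
    · ext i
      refine hdiv _ _ (X_sub_C_mem_Rsub (orbitPt c i)) (X_sub_C_ne_zero _) ?_
      simp [Pequiv_apply, poleSum_single, X_sub_C_mul_pole]
  ext f
  simpa using LinearMap.congr_fun hcomp ((Pequiv hroot).symm f)

end Endomorphisms

theorem not_exists_equiv_Rmod_commuting_X (c : Kˣ) :
    ¬∃ e : (Rmod K : Submodule K (RatFunc K)) ≃ₗ[K] (ℤ →₀ K),
      ∀ (f : Rmod K) (hf : RatFunc.X * (f : RatFunc K) ∈ Rmod K),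
        e ⟨RatFunc.X * (f : RatFunc K), hf⟩ = tQ c (e f) := by
  rintro ⟨e, he⟩
  set f : Rmod K := e.symm (Finsupp.single 0 1)
  have hXf : RatFunc.X * (f : RatFunc K) ∈ Rmod K :=
    (mul_mem X_mem_Rsub f.2 : _ ∈ Rsub K)
  have hfix : (RatFunc.X : RatFunc K) * f = f := by
    have h : e ⟨_, hXf⟩ = e f := by
      rw [he, LinearEquiv.apply_symm_apply, tQ_single, orbitPt_zero, one_mul]
    exact congrArg Subtype.val (e.injective h)
  have hf0 : (f : RatFunc K) = 0 := by
    refine eq_zero_of_X_sub_C_mul_eq_zero (d := 1) ?_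
    rw [map_one, sub_mul, one_mul, hfix, sub_self]
  have h := e.apply_symm_apply (Finsupp.single 0 1)
  rw [show e.symm (Finsupp.single 0 1) = 0 from Subtype.ext hf0, map_zero] at h
  exact one_ne_zero (Finsupp.single_eq_zero.1 h.symm)

/-- Let `c ∈ K*` not be a root of unity and `γ` the automorphism
of `K(t)` over `K` with `γ(t) = ct`, acting on `R = K[t,t⁻¹]`. Let `P` be the
`Γ`-equivariant `R`-module of rational functions with at most simple poles at the
points `c^i` (`i ∈ ℤ`) and `Q = ⊕_{i∈ℤ} R/(t - c^i)`. Then: the sequence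
`0 → R → P → Q → 0` of equivariant modules is exact and does not split; `R` and
`Q` are irreducible and non-isomorphic; and `P` is Schur irreducible but not
irreducible. -/
theorem stmt16 (c : Kˣ) (hroot : ∀ n : ℕ, 0 < n → c ^ n ≠ 1)
    (Γ : RatFunc K ≃ₐ[K] RatFunc K) (hΓ : Γ RatFunc.X = RatFunc.C (c : K) * RatFunc.X) :
    -- exactness: `P/R ≅ Q` equivariantly
    (∃ π : (Pmod c : Submodule K (RatFunc K)) →ₗ[K] (ℤ →₀ K),
      Function.Surjective π ∧
      (∀ f : Pmod c, π f = 0 ↔ (f : RatFunc K) ∈ Rmod K) ∧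
      (∀ (f : Pmod c) (hf : RatFunc.X * (f : RatFunc K) ∈ Pmod c),
        π ⟨RatFunc.X * (f : RatFunc K), hf⟩ = tQ c (π f)) ∧
      (∀ (f : Pmod c) (hf : Γ (f : RatFunc K) ∈ Pmod c),
        π ⟨Γ (f : RatFunc K), hf⟩ = γQ c (π f))) ∧
    -- the sequence does not split
    (¬ ∃ W : Submodule K (RatFunc K),
      Stab Γ W ∧ W ≤ Pmod c ∧ W ⊓ Rmod K = ⊥ ∧ W ⊔ Rmod K = Pmod c) ∧
    -- `R` is irreducible
    (∀ W : Submodule K (RatFunc K), Stab Γ W → W ≤ Rmod K → W = ⊥ ∨ W = Rmod K) ∧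
    -- `Q` is irreducible
    (∀ Wq : Submodule K (ℤ →₀ K),
      (∀ a ∈ Wq, tQ c a ∈ Wq) → (∀ a ∈ Wq, tQ c⁻¹ a ∈ Wq) →
      (∀ a ∈ Wq, γQ c a ∈ Wq) → (∀ a ∈ Wq, γQinv c a ∈ Wq) →
      Wq = ⊥ ∨ Wq = ⊤) ∧
    -- `R` and `Q` are not isomorphic as equivariant `R`-modules
    (¬ ∃ e : (Rmod K : Submodule K (RatFunc K)) ≃ₗ[K] (ℤ →₀ K),
      (∀ (f : Rmod K) (hf : RatFunc.X * (f : RatFunc K) ∈ Rmod K),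
        e ⟨RatFunc.X * (f : RatFunc K), hf⟩ = tQ c (e f)) ∧
      (∀ (f : Rmod K) (hf : Γ (f : RatFunc K) ∈ Rmod K),
        e ⟨Γ (f : RatFunc K), hf⟩ = γQ c (e f))) ∧
    -- `P` is Schur irreducible
    (∀ φ : (Pmod c : Submodule K (RatFunc K)) →ₗ[K] (Pmod c : Submodule K (RatFunc K)),
      (∀ r ∈ Rsub K, ∀ (f : Pmod c) (hrf : r * (f : RatFunc K) ∈ Pmod c),
        (φ ⟨r * (f : RatFunc K), hrf⟩ : RatFunc K) = r * (φ f : RatFunc K)) →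
      (∀ (f : Pmod c) (hf : Γ (f : RatFunc K) ∈ Pmod c),
        (φ ⟨Γ (f : RatFunc K), hf⟩ : RatFunc K) = Γ (φ f : RatFunc K)) →
      ∃ k : K, φ = k • LinearMap.id) ∧
    -- `P` is not irreducible
    (∃ W : Submodule K (RatFunc K),
      Stab Γ W ∧ W ≤ Pmod c ∧ W ≠ ⊥ ∧ W ≠ Pmod c) := by
  refine ⟨⟨residues hroot, residues_surjective hroot, residues_eq_zero_iff hroot,
    residues_X_mul hroot, residues_Γ hroot hΓ⟩, ?_, R_irreducible hΓ hroot,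
    fun Wq ht _ hγ hγinv => Q_irreducible hroot Wq ht hγ hγinv,
    fun ⟨e, he, _⟩ => not_exists_equiv_Rmod_commuting_X c ⟨e, he⟩,
    exists_eq_smul_id_of_equivariant hroot hΓ, ⟨Rmod K, stab_Rmod hΓ, Rmod_le_Pmod c, ?_, ?_⟩⟩
  · rintro ⟨W, hW, -, hWR, hsup⟩
    exact inv_X_sub_C_not_mem_sup hW.1 hWR (orbitPt_ne_zero c 0) (hsup ▸ pole_mem_Pmod c 0)
  · intro h
    have h1 : (1 : RatFunc K) ∈ Rmod K := one_mem (Rsub K)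
    exact one_ne_zero ((Submodule.mem_bot K).1 (h ▸ h1))
  · exact fun h => pole_not_mem_Rmod c 0 (h ▸ pole_mem_Pmod c 0)

end
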